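/- Let F be a finite field of characteristic p, let σ be a permutation of {1,…,n} with s cycles (fixed points counted as cycles of length 1), and suppose every cycle of σ has length congruent to l modulo p. Then for any two vectors v, w ∈ F^n that are fixed by σ (i.e. constant on each cycle of σ), the Euclidean inner products satisfy v·w = l·(π(v)·π(w)) in F, where the factor l is the image of the natural number l in F. -/

import Mathlib

open Finset

/-- The action of a permutation `σ` on vectors by permuting coordinates: `(vσ) i = v (σ i)`. -/
def permAct {F : Type*} {n : ℕ} (σ : Equiv.Perm (Fin n)) (v : Fin n → F) : Fin n → F :=
  fun i => v (σ i)

open Classical in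
/-- The cycle (orbit) of `σ` containing the coordinate `i`, as a `Finset`
(fixed points are counted as cycles of length 1). -/
noncomputable def orbitOf {n : ℕ} (σ : Equiv.Perm (Fin n)) (i : Fin n) : Finset (Fin n) :=
  Finset.univ.filter (fun j => σ.SameCycle i j)

/-- The Euclidean inner product `u·v = ∑ i, u i * v i`. -/
def eInner {F : Type*} [Field F] {ι : Type*} [Fintype ι] (u v : ι → F) : F :=
  ∑ i, u i * v i

/-- The Euclidean dual of a set of vectors. -/
def dualSet {F : Type*} [Field F] {ι : Type*} [Fintype ι] (S : Set (ι → F)) : Set (ι → F) :=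
  {u | ∀ v ∈ S, eInner u v = 0}

/-- A set of vectors is self-orthogonal if it is contained in its dual. -/
def IsSelfOrthogonalSet {F : Type*} [Field F] {ι : Type*} [Fintype ι] (S : Set (ι → F)) : Prop :=
  S ⊆ dualSet S

/-- A set of vectors is self-dual if it equals its dual. -/
def IsSelfDualSet {F : Type*} [Field F] {ι : Type*} [Fintype ι] (S : Set (ι → F)) : Prop :=
  S = dualSet S

/-- A set of vectors is LCD (linear complementary dual) if it meets its dual only in `0`. -/
def IsLCDSet {F : Type*} [Field F] {ι : Type*} [Fintype ι] (S : Set (ι → F)) : Prop :=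
  S ∩ dualSet S = {0}

/-- The fixed subcode `F_σ(C) = {v ∈ C : vσ = v}`. -/
def fixedCode {F : Type*} [Field F] {n : ℕ} (σ : Equiv.Perm (Fin n))
    (C : Submodule F (Fin n → F)) : Set (Fin n → F) :=
  {v | v ∈ C ∧ permAct σ v = v}

/-- The subcode `E_σ(C) = {v ∈ C : the sum of the coordinates of v over each cycle of σ is 0}`. -/
def evenCode {F : Type*} [Field F] {n : ℕ} (σ : Equiv.Perm (Fin n))
    (C : Submodule F (Fin n → F)) : Set (Fin n → F) :=
  {v | v ∈ C ∧ ∀ i : Fin n, ∑ j ∈ orbitOf σ i, v j = 0}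

/-- The setoid on coordinates whose classes are the cycles (orbits) of `σ`. -/
def cycleSetoid {n : ℕ} (σ : Equiv.Perm (Fin n)) : Setoid (Fin n) :=
  ⟨σ.SameCycle, ⟨fun x => Equiv.Perm.SameCycle.refl σ x, fun h => h.symm, fun h h' => h.trans h'⟩⟩

/-- The set of cycles of `σ` (fixed points counted as cycles of length 1); if `σ` has `s`
cycles then `Cycles σ → F` is a copy of `F^s`. -/
abbrev Cycles {n : ℕ} (σ : Equiv.Perm (Fin n)) : Type :=
  Quotient (cycleSetoid σ)

noncomputable instance {n : ℕ} (σ : Equiv.Perm (Fin n)) : Fintype (Cycles σ) :=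
  @Fintype.ofFinite _ (Quotient.finite _)

/-- The projection `π` picking one coordinate from each cycle of `σ`; on a `σ`-fixed vector
this is the common value of the vector on each cycle. -/
noncomputable def projPi {F : Type*} {n : ℕ} (σ : Equiv.Perm (Fin n)) (v : Fin n → F) :
    Cycles σ → F :=
  fun c => v c.out

/-! A `σ`-fixed vector is constant on every cycle of `σ`, so `v·w` splits into one sum per cycle,
equal to the length of the cycle times the product of the common values; in characteristic `p`
each of these lengths equals `l`. -/

section

variable {n : ℕ} {σ : Equiv.Perm (Fin n)}

lemma apply_eq_of_sameCycle {F : Type*} {v : Fin n → F} (hv : permAct σ v = v) {i j : Fin n}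
    (h : σ.SameCycle i j) : v i = v j := by
  have hsemi : Function.Semiconj v σ id := fun x => congrFun hv x
  obtain ⟨k, rfl⟩ := h.exists_nat_pow_eq
  rw [Equiv.Perm.coe_pow, hsemi.iterate_right k i, Function.iterate_id, id]

lemma mem_orbitOf {i j : Fin n} : j ∈ orbitOf σ i ↔ σ.SameCycle i j := by
  simp [orbitOf]

lemma sum_eq_sum_sum_orbitOf {M : Type*} [AddCommMonoid M] (f : Fin n → M) :
    ∑ i, f i = ∑ c : Cycles σ, ∑ i ∈ orbitOf σ c.out, f i := by
  classical
  rw [← sum_fiberwise univ (Quotient.mk (cycleSetoid σ)) f]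
  refine sum_congr rfl fun c _ => sum_congr ?_ fun _ _ => rfl
  ext i
  simp only [mem_filter, mem_univ, true_and, mem_orbitOf, Quotient.mk_eq_iff_out]
  exact Equiv.Perm.sameCycle_comm

lemma eInner_eq_sum_card_orbitOf_nsmul {F : Type*} [Field F] {v w : Fin n → F}
    (hv : permAct σ v = v) (hw : permAct σ w = w) :
    eInner v w = ∑ c : Cycles σ, (orbitOf σ c.out).card • (v c.out * w c.out) := by
  rw [eInner, sum_eq_sum_sum_orbitOf]
  refine sum_congr rfl fun c _ => sum_eq_card_nsmul fun i hi => ?_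
  have hci := (mem_orbitOf.1 hi).symm
  rw [apply_eq_of_sameCycle hv hci, apply_eq_of_sameCycle hw hci]

end

theorem inner_fixed_eq_card_mul_proj_inner_general {F : Type*} [Field F] (p : ℕ)
    [CharP F p] {n : ℕ} (σ : Equiv.Perm (Fin n)) (l : ℕ)
    (hcyc : ∀ i : Fin n, (orbitOf σ i).card ≡ l [MOD p])
    (v w : Fin n → F) (hv : permAct σ v = v) (hw : permAct σ w = w) :
    eInner v w = (l : F) * eInner (projPi σ v) (projPi σ w) := by
  rw [eInner_eq_sum_card_orbitOf_nsmul hv hw, eInner, mul_sum]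
  refine sum_congr rfl fun c _ => ?_
  rw [nsmul_eq_mul, (CharP.natCast_eq_natCast F p).2 (hcyc c.out)]
  rfl

/-- If every cycle of `σ` has length congruent to `l` modulo the
characteristic `p`, then for `σ`-fixed vectors `v, w` one has
`v·w = l·(π(v)·π(w))` in `F`. -/
theorem inner_fixed_eq_card_mul_proj_inner {F : Type*} [Field F] [Fintype F] (p : ℕ)
    [CharP F p] {n : ℕ} (σ : Equiv.Perm (Fin n)) (l : ℕ)
    (hcyc : ∀ i : Fin n, (orbitOf σ i).card ≡ l [MOD p])
    (v w : Fin n → F) (hv : permAct σ v = v) (hw : permAct σ w = w) :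
    eInner v w = (l : F) * eInner (projPi σ v) (projPi σ w) :=
  inner_fixed_eq_card_mul_proj_inner_general p σ l hcyc v w hv hw
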